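/- For every finitely supported complex sequence A with A_0 = 0, ∑_{n=1}^∞ (1/16) (n^2 / S̃_n^{3/2}) |A_n|^2 < ∑_{n=1}^∞ Ṽ_n |A_n|^2 ≤ ∑_{n=1}^∞ √(S̃_n) |A_n - A_{n-1}|^2 / n^2, provided A is not identically zero, where S̃_n = n(n+1)(2n+1)/6 and Ṽ_n = √(S̃_n)/n^2 + √(S̃_{n+1})/(n+1)^2 - (√(S̃_n)/n^2)(1-1/n)^{3/4} - (√(S̃_{n+1})/(n+1)^2)(1+1/n)^{3/4}. -/

import Mathlib

lemma rpow34_le {y z : ℝ} (hy : 0 ≤ y) (hz : 0 ≤ z) (h : y^3 ≤ z^4) : y ^ ((3:ℝ)/4) ≤ z := by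
  apply le_of_pow_le_pow_left₀ (n := 4) (by norm_num) hz
  have h1 : (y ^ ((3:ℝ)/4))^(4:ℕ) = y^(3:ℕ) := by
    rw [← Real.rpow_natCast (y ^ ((3:ℝ)/4)) 4, ← Real.rpow_mul hy, ← Real.rpow_natCast y 3]
    norm_num
  rw [h1]; exact h

lemma lemA {x : ℝ} (hx0 : 0 ≤ x) (hx1 : x ≤ 1) :
    (1 - x) ^ ((3:ℝ)/4) ≤ 1 - (3/4)*x - (3/32)*x^2 := by
  apply rpow34_le (by linarith)
  · nlinarith [sq_nonneg x, sq_nonneg (1-x)]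
  · nlinarith [sq_nonneg x, sq_nonneg (1-x), sq_nonneg (x*(1-x)), sq_nonneg (x*x), mul_nonneg hx0 hx0, mul_nonneg (mul_nonneg hx0 hx0) hx0, sq_nonneg (x^2*(1-x)), sq_nonneg (x^3)]

lemma lemB {x : ℝ} (hx0 : 0 ≤ x) (hx1 : x ≤ 1) :
    (1 + x) ^ ((3:ℝ)/4) ≤ 1 + (3/4)*x - (3/32)*x^2 + (5/128)*x^3 := by
  apply rpow34_le (by linarith)
  · nlinarith [sq_nonneg x, mul_nonneg (mul_nonneg hx0 hx0) hx0]
  · nlinarith [sq_nonneg x, mul_nonneg (mul_nonneg hx0 hx0) hx0, sq_nonneg (x*(1-x)), sq_nonneg (x*x), sq_nonneg (x^2*(1-x)), sq_nonneg (x^3), sq_nonneg (x^3*(1-x)), sq_nonneg (x^4), mul_nonneg (mul_nonneg (mul_nonneg hx0 hx0) hx0) hx0]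

set_option maxHeartbeats 1000000 in
lemma mainpt (m : ℝ) (hm : 1 ≤ m) :
    (1/16) * (m^2 / (m*(m+1)*(2*m+1)/6) ^ ((3:ℝ)/2)) <
      Real.sqrt (m*(m+1)*(2*m+1)/6) / m^2 + Real.sqrt ((m+1)*(m+2)*(2*m+3)/6) / (m+1)^2
      - (Real.sqrt (m*(m+1)*(2*m+1)/6) / m^2) * (1 - 1/m) ^ ((3:ℝ)/4)
      - (Real.sqrt ((m+1)*(m+2)*(2*m+3)/6) / (m+1)^2) * (1 + 1/m) ^ ((3:ℝ)/4) := by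
  have hm0 : (0:ℝ) < m := by linarith
  have hSm : (0:ℝ) < m*(m+1)*(2*m+1)/6 := by
    have h1 : (0:ℝ) < m+1 := by linarith
    have h2 : (0:ℝ) < 2*m+1 := by linarith
    positivity
  have hSm1 : (0:ℝ) < (m+1)*(m+2)*(2*m+3)/6 := by
    have h1 : (0:ℝ) < m+1 := by linarith
    have h2 : (0:ℝ) < m+2 := by linarith
    have h3 : (0:ℝ) < 2*m+3 := by linarith
    positivity
  set a := Real.sqrt (m*(m+1)*(2*m+1)/6) with hadef
  set b := Real.sqrt ((m+1)*(m+2)*(2*m+3)/6) with hbdef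
  have ha0 : 0 < a := Real.sqrt_pos.mpr hSm
  have hb0 : 0 < b := Real.sqrt_pos.mpr hSm1
  have ha2 : a^2 = m*(m+1)*(2*m+1)/6 := Real.sq_sqrt hSm.le
  have hb2 : b^2 = (m+1)*(m+2)*(2*m+3)/6 := Real.sq_sqrt hSm1.le
  have hx0 : (0:ℝ) ≤ 1/m := by positivity
  have hx1 : 1/m ≤ 1 := by rw [div_le_one hm0]; linarith
  have hA := lemA hx0 hx1
  have hB := lemB hx0 hx1
  have hab : a*b ≤ (m+1)*(2*(m+1)^2 - 5/4)/6 := by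
    have hq0 : (0:ℝ) < (m+1)*(2*(m+1)^2 - 5/4)/6 := by nlinarith [sq_nonneg (m+1)]
    have h1 : (a*b)^2 ≤ ((m+1)*(2*(m+1)^2 - 5/4)/6)^2 := by
      rw [mul_pow, ha2, hb2]; nlinarith [sq_nonneg (m+1)]
    nlinarith [mul_nonneg ha0.le hb0.le]
  have hrw : (m*(m+1)*(2*m+1)/6) ^ ((3:ℝ)/2) = a^3 := by
    rw [hadef, Real.sqrt_eq_rpow, ← Real.rpow_natCast ((m*(m+1)*(2*m+1)/6) ^ ((1:ℝ)/2)) 3,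
      ← Real.rpow_mul hSm.le]
    norm_num
  rw [hrw]
  have h4 : 0 < (96*m+12)*(m+1)^2*(a^2)^2
      - m*(96*m^2-12*m+5)*(a^2*((m+1)*(2*(m+1)^2 - 5/4)/6)) - 8*m^6*(m+1)^2 := by
    rw [ha2]
    obtain ⟨u, hu, rfl⟩ : ∃ u, 0 ≤ u ∧ m = 1 + u := ⟨m - 1, by linarith, by ring⟩
    nlinarith [pow_nonneg hu 2, pow_nonneg hu 3, pow_nonneg hu 4, pow_nonneg hu 5,
      pow_nonneg hu 6, pow_nonneg hu 7]
  have h3 : m*(96*m^2-12*m+5)*(a^2*(a*b)) ≤ m*(96*m^2-12*m+5)*(a^2*((m+1)*(2*(m+1)^2 - 5/4)/6)) := by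
    apply mul_le_mul_of_nonneg_left (mul_le_mul_of_nonneg_left hab (sq_nonneg a))
    nlinarith
  have hE : 0 < (96*m+12)*(m+1)^2*(a^2)^2
      - m*(96*m^2-12*m+5)*(a^2*(a*b)) - 8*m^6*(m+1)^2 := by linarith
  have step1 : (1/16) * (m^2 / a^3) <
      (a/m^2)*((3/4)*(1/m) + (3/32)*(1/m)^2)
      - (b/(m+1)^2)*((3/4)*(1/m) - (3/32)*(1/m)^2 + (5/128)*(1/m)^3) := by
    rw [← sub_pos]
    have hq : (a/m^2)*((3/4)*(1/m) + (3/32)*(1/m)^2)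
        - (b/(m+1)^2)*((3/4)*(1/m) - (3/32)*(1/m)^2 + (5/128)*(1/m)^3)
        - (1/16) * (m^2 / a^3)
        = ((96*m+12)*(m+1)^2*(a^2)^2
          - m*(96*m^2-12*m+5)*(a^2*(a*b)) - 8*m^6*(m+1)^2) / (128*m^4*(m+1)^2*a^3) := by
      field_simp
      ring
    rw [hq]
    exact div_pos hE (by positivity)
  have e1 : (a/m^2) * (1 - 1/m) ^ ((3:ℝ)/4) ≤ (a/m^2) * (1 - (3/4)*(1/m) - (3/32)*(1/m)^2) :=
    mul_le_mul_of_nonneg_left hA (by positivity)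
  have e2 : (b/(m+1)^2) * (1 + 1/m) ^ ((3:ℝ)/4) ≤
      (b/(m+1)^2) * (1 + (3/4)*(1/m) - (3/32)*(1/m)^2 + (5/128)*(1/m)^3) :=
    mul_le_mul_of_nonneg_left hB (by positivity)
  have expand : (a/m^2)*((3/4)*(1/m) + (3/32)*(1/m)^2)
      - (b/(m+1)^2)*((3/4)*(1/m) - (3/32)*(1/m)^2 + (5/128)*(1/m)^3)
      = a/m^2 + b/(m+1)^2 - (a/m^2) * (1 - (3/4)*(1/m) - (3/32)*(1/m)^2)
        - (b/(m+1)^2) * (1 + (3/4)*(1/m) - (3/32)*(1/m)^2 + (5/128)*(1/m)^3) := by ring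
  rw [expand] at step1
  linarith

lemma mainpt' (m S1 S2 : ℝ) (hm : 1 ≤ m) (h1 : S1 = m*(m+1)*(2*m+1)/6)
    (h2 : S2 = (m+1)*(m+2)*(2*m+3)/6) :
    (1/16) * (m^2 / S1 ^ ((3:ℝ)/2)) <
      Real.sqrt S1 / m^2 + Real.sqrt S2 / (m+1)^2
      - Real.sqrt S1 / m^2 * (1 - 1/m) ^ ((3:ℝ)/4)
      - Real.sqrt S2 / (m+1)^2 * (1 + 1/m) ^ ((3:ℝ)/4) := by
  subst h1 h2; exact mainpt m hm

lemma step2 (w t s : ℝ) (hw : 0 ≤ w) (ht : 0 < t) (hts : t * s = 1) (aa bb : ℂ) :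
    w * (1 - t) * ‖aa‖^2 - w * (s - 1) * ‖bb‖^2 ≤ w * ‖aa - bb‖^2 := by
  have h1 : (‖aa‖ - ‖bb‖)^2 ≤ ‖aa - bb‖^2 := by
    have h := abs_norm_sub_norm_le aa bb
    calc (‖aa‖ - ‖bb‖)^2 = |‖aa‖ - ‖bb‖|^2 := (sq_abs _).symm
    _ ≤ ‖aa - bb‖^2 := by apply pow_le_pow_left₀ (abs_nonneg _) h
  have hsy : t*(s*‖bb‖^2) = ‖bb‖^2 := by rw [← mul_assoc, hts, one_mul]
  have h2' : 2*‖aa‖*‖bb‖ ≤ t*‖aa‖^2 + s*‖bb‖^2 := by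
    nlinarith [sq_nonneg (t*‖aa‖ - ‖bb‖), ht, hsy]
  have h2 : (1 - t) * ‖aa‖^2 - (s - 1) * ‖bb‖^2 ≤ ‖aa - bb‖^2 := by nlinarith [h1, h2']
  nlinarith [mul_le_mul_of_nonneg_left h2 hw]

theorem stmt_9 (S : ℕ → ℝ) (hS : ∀ n, S n = (n : ℝ) * ((n : ℝ) + 1) * (2 * (n : ℝ) + 1) / 6)
    (V : ℕ → ℝ)
    (hV : ∀ n, V n = Real.sqrt (S n) / (n : ℝ) ^ 2 + Real.sqrt (S (n + 1)) / ((n : ℝ) + 1) ^ 2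
      - (Real.sqrt (S n) / (n : ℝ) ^ 2) * (1 - 1 / (n : ℝ)) ^ ((3 : ℝ) / 4)
      - (Real.sqrt (S (n + 1)) / ((n : ℝ) + 1) ^ 2) * (1 + 1 / (n : ℝ)) ^ ((3 : ℝ) / 4))
    (A : ℕ → ℂ) (hsupp : (Function.support A).Finite) (h0 : A 0 = 0) (hne : A ≠ 0) :
    (∑' n : ℕ, (1 / 16) * (((n : ℝ) + 1) ^ 2 / (S (n + 1)) ^ ((3 : ℝ) / 2)) * ‖A (n + 1)‖ ^ 2) <
      (∑' n : ℕ, V (n + 1) * ‖A (n + 1)‖ ^ 2) ∧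
    (∑' n : ℕ, V (n + 1) * ‖A (n + 1)‖ ^ 2) ≤
      ∑' n : ℕ, Real.sqrt (S (n + 1)) * ‖A (n + 1) - A n‖ ^ 2 / ((n : ℝ) + 1) ^ 2 := by
  -- support bound
  obtain ⟨N, hN⟩ := hsupp.bddAbove
  have hzero : ∀ n, N + 1 ≤ n → A n = 0 := by
    intro n hn
    by_contra h
    have := hN (Function.mem_support.mpr h)
    omega
  -- key pointwise inequality
  have hkey : ∀ n : ℕ, (1/16) * (((n:ℝ)+1)^2 / (S (n+1)) ^ ((3:ℝ)/2)) < V (n+1) := by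
    intro n
    have hm : (1:ℝ) ≤ (n:ℝ)+1 := by
      have : (0:ℝ) ≤ (n:ℝ) := n.cast_nonneg
      linarith
    rw [hV (n+1)]
    push_cast
    exact mainpt' ((n:ℝ)+1) (S (n+1)) (S (n+1+1)) hm
      (by rw [hS (n+1)]; push_cast; ring)
      (by rw [hS (n+1+1)]; push_cast; ring)
  -- summability
  have hsumm : ∀ (f : ℕ → ℝ), (∀ n, N + 1 ≤ n → f n = 0) → Summable f := by
    intro f hf
    apply summable_of_ne_finset_zero (s := Finset.range (N+1))
    intro n hn
    exact hf n (by simpa using Finset.mem_range.not.mp hn)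
  constructor
  · -- strict inequality
    obtain ⟨i, hi⟩ : ∃ i, A i ≠ 0 := Function.ne_iff.mp hne
    obtain ⟨k, rfl⟩ : ∃ k, i = k + 1 := by
      cases i with
      | zero => exact absurd h0 hi
      | succ k => exact ⟨k, rfl⟩
    apply Summable.tsum_lt_tsum (i := k)
    · intro b
      exact mul_le_mul_of_nonneg_right (hkey b).le (by positivity)
    · have hpos : 0 < ‖A (k+1)‖^2 := by
        have : 0 < ‖A (k+1)‖ := norm_pos_iff.mpr hi
        positivity
      exact mul_lt_mul_of_pos_right (hkey k) hpos
    · apply hsumm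
      intro n hn
      have : A (n+1) = 0 := hzero (n+1) (by omega)
      simp [this]
    · apply hsumm
      intro n hn
      have : A (n+1) = 0 := hzero (n+1) (by omega)
      simp [this]
  · -- second inequality
    set G : ℕ → ℝ := fun n =>
      (Real.sqrt (S (n+1)) / ((n:ℝ)+1)^2) * (1 - (1 - 1/((n:ℝ)+1)) ^ ((3:ℝ)/4)) * ‖A (n+1)‖^2
      with hGdef
    set H : ℕ → ℝ := fun n =>
      (Real.sqrt (S (n+1)) / ((n:ℝ)+1)^2) * ((1 + 1/(n:ℝ)) ^ ((3:ℝ)/4) - 1) * ‖A n‖^2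
      with hHdef
    have claim1 : ∀ n : ℕ, V (n+1) * ‖A (n+1)‖^2 = G n - H (n+1) := by
      intro n
      rw [hGdef, hHdef, hV (n+1)]
      push_cast
      ring
    have hHnonneg : ∀ n : ℕ, 0 ≤ H n := by
      intro n
      rw [hHdef]
      have h1 : (1:ℝ) ≤ (1 + 1/(n:ℝ)) ^ ((3:ℝ)/4) := by
        calc (1:ℝ) = 1 ^ ((3:ℝ)/4) := (Real.one_rpow _).symm
        _ ≤ (1 + 1/(n:ℝ)) ^ ((3:ℝ)/4) := by
            apply Real.rpow_le_rpow (by norm_num)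
              (by have : (0:ℝ) ≤ 1/(n:ℝ) := by positivity
                  linarith) (by norm_num)
      have h2 : (0:ℝ) ≤ Real.sqrt (S (n+1)) / ((n:ℝ)+1)^2 := by positivity
      have h3 : (0:ℝ) ≤ ‖A n‖^2 := by positivity
      have := mul_nonneg (mul_nonneg h2 (by linarith : (0:ℝ) ≤ (1 + 1/(n:ℝ)) ^ ((3:ℝ)/4) - 1)) h3
      simpa using this
    have claim2 : ∀ n : ℕ, G n - H n ≤ Real.sqrt (S (n+1)) * ‖A (n+1) - A n‖^2 / ((n:ℝ)+1)^2 := by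
      intro n
      rw [hGdef, hHdef]
      cases n with
      | zero =>
        simp only [Nat.cast_zero]
        rw [h0]
        norm_num [Real.zero_rpow (by norm_num : ((3:ℝ)/4) ≠ 0), Real.one_rpow]
      | succ k =>
        have hc : (0:ℝ) < (k:ℝ)+1 := by positivity
        have ht : (0:ℝ) < (1 - 1/(((k:ℕ):ℝ)+1+1)) ^ ((3:ℝ)/4) := by
          apply Real.rpow_pos_of_pos
          have : 1/((k:ℝ)+1+1) < 1 := by
            rw [div_lt_one (by linarith)]; linarith
          push_cast
          linarith
        have hts : (1 - 1/(((k:ℕ):ℝ)+1+1)) ^ ((3:ℝ)/4) * (1 + 1/((k:ℕ)+1:ℝ)) ^ ((3:ℝ)/4) = 1 := by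
          push_cast
          rw [← Real.mul_rpow (by rw [show (1:ℝ) - 1/((k:ℝ)+1+1) = ((k:ℝ)+1)/((k:ℝ)+1+1) by field_simp; ring]; positivity) (by positivity)]
          rw [show (1 - 1/((k:ℝ)+1+1)) * (1 + 1/((k:ℝ)+1)) = 1 by field_simp; ring]
          exact Real.one_rpow _
        have hw : (0:ℝ) ≤ Real.sqrt (S (k+1+1)) / (((k:ℕ):ℝ)+1+1)^2 := by positivity
        have := step2 (Real.sqrt (S (k+1+1)) / (((k:ℕ):ℝ)+1+1)^2)
          ((1 - 1/(((k:ℕ):ℝ)+1+1)) ^ ((3:ℝ)/4)) ((1 + 1/((k:ℕ)+1:ℝ)) ^ ((3:ℝ)/4))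
          hw ht hts (A (k+1+1)) (A (k+1))
        push_cast
        calc √(S (k+1+1)) / ((k:ℝ)+1+1)^2 * (1 - (1 - 1/((k:ℝ)+1+1)) ^ ((3:ℝ)/4)) * ‖A (k+1+1)‖^2
            - √(S (k+1+1)) / ((k:ℝ)+1+1)^2 * ((1 + 1/((k:ℝ)+1)) ^ ((3:ℝ)/4) - 1) * ‖A (k+1)‖^2
            ≤ √(S (k+1+1)) / ((k:ℝ)+1+1)^2 * ‖A (k+1+1) - A (k+1)‖^2 := this
          _ = √(S (k+1+1)) * ‖A (k+1+1) - A (k+1)‖^2 / ((k:ℝ)+1+1)^2 := by ring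
    -- convert tsums to finite sums
    rw [tsum_eq_sum (s := Finset.range (N+1))
        (by intro n hn
            have hn' : N + 1 ≤ n := by simpa using Finset.mem_range.not.mp hn
            have h1 : A (n+1) = 0 := hzero (n+1) (by omega)
            simp [h1]),
      tsum_eq_sum (s := Finset.range (N+1))
        (by intro n hn
            have hn' : N + 1 ≤ n := by simpa using Finset.mem_range.not.mp hn
            have h1 : A (n+1) = 0 := hzero (n+1) (by omega)
            have h2 : A n = 0 := hzero n hn'
            simp [h1, h2])]
    calc ∑ n ∈ Finset.range (N+1), V (n+1) * ‖A (n+1)‖^2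
        = ∑ n ∈ Finset.range (N+1), (G n - H (n+1)) :=
          Finset.sum_congr rfl (fun n _ => claim1 n)
      _ = ∑ n ∈ Finset.range (N+1), G n - ∑ n ∈ Finset.range (N+1), H (n+1) := by
          rw [Finset.sum_sub_distrib]
      _ ≤ ∑ n ∈ Finset.range (N+1), G n - ∑ n ∈ Finset.range (N+1), H n := by
          have hs : ∑ n ∈ Finset.range (N+1+1), H n
              = ∑ n ∈ Finset.range (N+1), H (n+1) + H 0 := Finset.sum_range_succ' H (N+1)
          have hs2 : ∑ n ∈ Finset.range (N+1+1), H n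
              = ∑ n ∈ Finset.range (N+1), H n + H (N+1) := Finset.sum_range_succ H (N+1)
          have hH0 : H 0 = 0 := by rw [hHdef]; simp [h0]
          have := hHnonneg (N+1)
          linarith
      _ = ∑ n ∈ Finset.range (N+1), (G n - H n) := by rw [Finset.sum_sub_distrib]
      _ ≤ ∑ n ∈ Finset.range (N+1), Real.sqrt (S (n+1)) * ‖A (n+1) - A n‖^2 / ((n:ℝ)+1)^2 :=
          Finset.sum_le_sum (fun n _ => claim2 n)
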